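/- Fix integers n ≥ 1 and k with k ≥ e^n, and let p_c be a probability mass function on the alphabet {0, 1, …, k} with p_c(0) ≥ 1/2 and p_c(i) = (1 − p_c(0))/k for all 1 ≤ i ≤ k. Then with probability at least 1 − 2^{−n} over X^n ∼ p_c^{⊗n}, the missing mass satisfies (1 − p_c(0))·(1 − n·e^{−n}) ≤ M_0(X^n) ≤ 1 − p_c(0); in particular |M_0(X^n) − (1 − p_c(0))| ≤ n·e^{−n}. -/

import Mathlib

open scoped BigOperators Classical

noncomputable section

/-- `N_u(X^n)`: the number of appearances of the symbol `u` in the sample `x`. -/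
def nOcc {m n : ℕ} (x : Fin n → Fin m) (u : Fin m) : ℕ :=
  (Finset.univ.filter fun i => x i = u).card

/-- The missing mass `M₀(X^n) = ∑_{u=0}^{k} q(u) 𝟙[N_u(X^n) = 0]` on `{0,…,k}`. -/
def missingMass {m n : ℕ} (q : Fin m → ℝ) (x : Fin n → Fin m) : ℝ :=
  ∑ u : Fin m, if nOcc x u = 0 then q u else 0

/-!
Once the heavy symbol `0` has been drawn, which happens except with probability
`(1 - p_c(0))ⁿ ≤ 2⁻ⁿ`, the missing mass is `(1 - p_c(0))/k` times the number of unseen symbols.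
At most `n` symbols are seen, so this number lies between `k + 1 - n` and `k`, and
`n / k ≤ n e⁻ⁿ` because `k ≥ eⁿ`.
-/

open Finset

section SeenSymbols

variable {m n : ℕ}

theorem nOcc_eq_zero_iff (x : Fin n → Fin m) (u : Fin m) :
    nOcc x u = 0 ↔ u ∉ univ.image x := by
  simp [nOcc, filter_eq_empty_iff]

theorem missingMass_eq_sum_compl_image (q : Fin m → ℝ) (x : Fin n → Fin m) :
    missingMass q x = ∑ u ∈ (univ.image x)ᶜ, q u := by
  simp only [missingMass, nOcc_eq_zero_iff, ← sum_filter, filter_not, filter_mem_eq_inter,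
    univ_inter, compl_eq_univ_sdiff]

theorem missingMass_eq_mul_card {q : Fin m → ℝ} {x : Fin n → Fin m} {a : Fin m} {c : ℝ}
    (hq : ∀ u, u ≠ a → q u = c) (ha : a ∈ univ.image x) :
    missingMass q x = #(univ.image x)ᶜ * c := by
  rw [missingMass_eq_sum_compl_image, ← nsmul_eq_mul, ← sum_const]
  exact sum_congr rfl fun u hu => hq u (ne_of_mem_of_not_mem ha (mem_compl.1 hu)).symm

theorem card_compl_image_le {x : Fin n → Fin m} {a : Fin m} (ha : a ∈ univ.image x) :
    #(univ.image x)ᶜ ≤ m - 1 := by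
  have := (card_compl_lt_iff_nonempty _).2 ⟨a, ha⟩
  rw [Fintype.card_fin] at this
  omega

theorem sub_le_card_compl_image (x : Fin n → Fin m) :
    (m : ℝ) - n ≤ #(univ.image x)ᶜ := by
  have hsum := card_compl_add_card (univ.image x)
  have himage : #(univ.image x) ≤ n := card_image_le.trans (by simp)
  simp only [Fintype.card_fin] at hsum
  have : m ≤ #(univ.image x)ᶜ + n := by omega
  have : (m : ℝ) ≤ #(univ.image x)ᶜ + n := by exact_mod_cast this
  linarith

theorem missingMass_bounds {q : Fin m → ℝ} {x : Fin n → Fin m} {a : Fin m} {c : ℝ} (hc : 0 ≤ c)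
    (hq : ∀ u, u ≠ a → q u = c) (ha : a ∈ univ.image x) :
    ((m : ℝ) - n) * c ≤ missingMass q x ∧ missingMass q x ≤ ((m - 1 : ℕ) : ℝ) * c := by
  rw [missingMass_eq_mul_card hq ha]
  exact ⟨mul_le_mul_of_nonneg_right (sub_le_card_compl_image x) hc,
    mul_le_mul_of_nonneg_right (by exact_mod_cast card_compl_image_le ha) hc⟩

end SeenSymbols

theorem sum_prod_filter_mem_image {α : Type*} [Fintype α] [DecidableEq α] {q : α → ℝ}
    (hq : ∑ u, q u = 1) (n : ℕ) (a : α) :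
    ∑ x ∈ univ.filter (fun x : Fin n → α => a ∈ univ.image x), ∏ i, q (x i)
      = 1 - (1 - q a) ^ n := by
  have htotal : ∑ x : Fin n → α, ∏ i, q (x i) = 1 := by
    rw [← Fintype.piFinset_univ, ← sum_pow', hq, one_pow]
  have hmissed : univ.filter (fun x : Fin n → α => a ∉ univ.image x)
      = Fintype.piFinset fun _ => univ.erase a := by
    ext x; simp [Fintype.mem_piFinset, eq_comm]
  have hcompl : ∑ u ∈ univ.erase a, q u = 1 - q a := by
    rw [← hq, ← add_sum_erase univ q (mem_univ a), add_sub_cancel_left]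
  have hsplit := sum_filter_add_sum_filter_not univ (fun x : Fin n → α => a ∈ univ.image x)
    fun x => ∏ i, q (x i)
  rw [hmissed, ← sum_pow', hcompl, htotal] at hsplit
  linarith

theorem div_le_mul_exp_neg {n k : ℝ} (hn : 0 ≤ n) (hk : Real.exp n ≤ k) :
    n / k ≤ n * Real.exp (-n) := by
  have hk0 : 0 < k := (Real.exp_pos n).trans_le hk
  rw [div_le_iff₀ hk0]
  calc n = n * Real.exp (-n) * Real.exp n := by
        rw [mul_assoc, ← Real.exp_add, neg_add_cancel, Real.exp_zero, mul_one]
    _ ≤ n * Real.exp (-n) * k := by gcongr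

theorem missingMass_near_of_mem_image {n k : ℕ} (hk : Real.exp n ≤ (k : ℝ)) {q : Fin (k + 1) → ℝ}
    (hq0 : 0 ≤ q 0) (hq0_le : q 0 ≤ 1) (hq_unif : ∀ i : Fin (k + 1), i ≠ 0 → q i = (1 - q 0) / k)
    {x : Fin n → Fin (k + 1)} (hx : 0 ∈ univ.image x) :
    (1 - q 0) * (1 - (n : ℝ) * Real.exp (-(n : ℝ))) ≤ missingMass q x ∧
      missingMass q x ≤ 1 - q 0 ∧
      |missingMass q x - (1 - q 0)| ≤ (n : ℝ) * Real.exp (-(n : ℝ)) := by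
  have hk0 : (0 : ℝ) < k := (Real.exp_pos n).trans_le hk
  have hc : 0 ≤ (1 - q 0) / k := div_nonneg (by linarith) hk0.le
  have hck : (k : ℝ) * ((1 - q 0) / k) = 1 - q 0 := mul_div_cancel₀ _ hk0.ne'
  obtain ⟨hlo, hhi⟩ := missingMass_bounds hc hq_unif hx
  simp only [Nat.add_sub_cancel, Nat.cast_add, Nat.cast_one] at hlo hhi
  have hnk : (n : ℝ) / k ≤ n * Real.exp (-n) := div_le_mul_exp_neg n.cast_nonneg hk
  have hlower : (1 - q 0) * (1 - n * Real.exp (-n)) ≤ missingMass q x :=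
    calc (1 - q 0) * (1 - n * Real.exp (-n)) ≤ (1 - q 0) * (1 - n / k) := by gcongr
      _ = (k - n) * ((1 - q 0) / k) := by field_simp
      _ ≤ missingMass q x := by linarith
  have hupper : missingMass q x ≤ 1 - q 0 := hck ▸ hhi
  have hne : 0 ≤ (n : ℝ) * Real.exp (-n) := mul_nonneg n.cast_nonneg (Real.exp_pos _).le
  exact ⟨hlower, hupper, abs_le.2 ⟨by nlinarith, by linarith⟩⟩

theorem missing_mass_concentration_Pc_general (n k : ℕ)
    (hk : Real.exp n ≤ (k : ℝ))
    (q : Fin (k + 1) → ℝ) (hq_nonneg : ∀ u, 0 ≤ q u) (hq_sum : (∑ u, q u) = 1)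
    (hq0 : 1 / 2 ≤ q 0) (hq_unif : ∀ i : Fin (k + 1), i ≠ 0 → q i = (1 - q 0) / k) :
    1 - (1 / 2 : ℝ) ^ n ≤
      ∑ x ∈ Finset.univ.filter (fun x : Fin n → Fin (k + 1) =>
          (1 - q 0) * (1 - (n : ℝ) * Real.exp (-(n : ℝ))) ≤ missingMass q x ∧
          missingMass q x ≤ 1 - q 0 ∧
          |missingMass q x - (1 - q 0)| ≤ (n : ℝ) * Real.exp (-(n : ℝ))),
        ∏ i, q (x i) := by
  have hq0_le : q 0 ≤ 1 := hq_sum ▸ single_le_sum (fun u _ => hq_nonneg u) (mem_univ 0)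
  calc 1 - (1 / 2 : ℝ) ^ n ≤ 1 - (1 - q 0) ^ n := by gcongr; linarith
    _ = ∑ x ∈ univ.filter (fun x : Fin n → Fin (k + 1) => 0 ∈ univ.image x), ∏ i, q (x i) :=
      (sum_prod_filter_mem_image hq_sum n 0).symm
    _ ≤ _ := sum_le_sum_of_subset_of_nonneg
      (monotone_filter_right _ fun x _ hx =>
        missingMass_near_of_mem_image hk (hq_nonneg 0) hq0_le hq_unif hx)
      fun x _ _ => prod_nonneg fun i _ => hq_nonneg (x i)

/-- **Lemma 9:** let `n ≥ 1`, `k ≥ eⁿ`, and let `p_c` be a pmf on `{0,…,k}` with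
`p_c(0) ≥ 1/2` and `p_c(i) = (1 - p_c(0))/k` for `1 ≤ i ≤ k`.  Then, with
probability at least `1 - 2⁻ⁿ` over `X^n ∼ p_c^⊗n`, the missing mass satisfies
`(1 - p_c(0))(1 - n e⁻ⁿ) ≤ M₀(X^n) ≤ 1 - p_c(0)`, and in particular
`|M₀(X^n) - (1 - p_c(0))| ≤ n e⁻ⁿ`. -/
theorem missing_mass_concentration_Pc (n k : ℕ) (hn : 1 ≤ n)
    (hk : Real.exp n ≤ (k : ℝ))
    (q : Fin (k + 1) → ℝ) (hq_nonneg : ∀ u, 0 ≤ q u) (hq_sum : (∑ u, q u) = 1)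
    (hq0 : 1 / 2 ≤ q 0) (hq_unif : ∀ i : Fin (k + 1), i ≠ 0 → q i = (1 - q 0) / k) :
    1 - (1 / 2 : ℝ) ^ n ≤
      ∑ x ∈ Finset.univ.filter (fun x : Fin n → Fin (k + 1) =>
          (1 - q 0) * (1 - (n : ℝ) * Real.exp (-(n : ℝ))) ≤ missingMass q x ∧
          missingMass q x ≤ 1 - q 0 ∧
          |missingMass q x - (1 - q 0)| ≤ (n : ℝ) * Real.exp (-(n : ℝ))),
        ∏ i, q (x i) :=
  missing_mass_concentration_Pc_general n k hk q hq_nonneg hq_sum hq0 hq_unif
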